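/- Let n ≥ 1, λ ∈ (0, 2π/n), P, Q ∈ π_n(𝕋) with c_P ≠ c_Q, F := P − Q, S := P_+·Q_− − P_−·Q_+, and T := F_+·(F^{*n})_− − F_−·(F^{*n})_+. If F ∈ D̄_n(λ) \ T̄_n(λ), then every zero of S on 𝕋 and every zero of T on 𝕋 is of even order. -/

import Mathlib

/-!
On the unit circle `F^{*n}(w) = wⁿ · conj F(w)`, so
`T(w) = 2i wⁿ · Im(e^{-inλ/2} F₊(w) conj F₋(w))`. That imaginary part is
`|F₋(w)|² Im(e^{-inλ/2} F₊/F₋)`, positive outside the disk for `F ∈ D̄_n(λ)`, hence `≥ 0` on the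
circle by continuity. So `-i w̄ⁿ T` is a nonnegative real function on the circle, and a polynomial
cannot change sign through a zero of odd order there. Self-inversiveness gives `P^{*n} = c_P² P`
and `Q^{*n} = c_Q² Q`, whence `T = (c_P² - c_Q²) S`, and `c_P² ≠ c_Q²` because `t_P, t_Q ∈ [0, π)`.
-/

open Polynomial Complex Finset
open scoped Classical

noncomputable section

/-- `uexp t = e^{it}`. -/
def uexp (t : ℝ) : ℂ := Complex.exp (Complex.I * t)

/-- Angular distance between two angles, measured on the circle `ℝ / 2πℤ`. -/
def angDist (x y : ℝ) : ℝ := ‖((x - y : ℝ) : AddCircle (2 * Real.pi))‖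

/-- `polyOn n Ω` : polynomials of degree exactly `n` with all zeros in `Ω`. -/
def polyOn (n : ℕ) (Ω : Set ℂ) : Set (Polynomial ℂ) :=
  {P | P.natDegree = n ∧ ∀ z : ℂ, P.IsRoot z → z ∈ Ω}

/-- `polyLe n Ω` : nonzero polynomials of degree at most `n` with all zeros in `Ω`. -/
def polyLe (n : ℕ) (Ω : Set ℂ) : Set (Polynomial ℂ) :=
  {P | P ≠ 0 ∧ P.natDegree ≤ n ∧ ∀ z : ℂ, P.IsRoot z → z ∈ Ω}

/-- Suffridge's class `T̄_n(λ)`. -/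
def Tbar (n : ℕ) (lam : ℝ) : Set (Polynomial ℂ) :=
  {P | ∃ (a : ℂ) (θ : Fin n → ℝ), a ≠ 0 ∧
    P = C a * ∏ j, (X - C (uexp (θ j))) ∧
    ∀ j k, j ≠ k → lam ≤ angDist (θ j) (θ k)}

/-- Suffridge's class `T_n(λ)`. -/
def Tstrict (n : ℕ) (lam : ℝ) : Set (Polynomial ℂ) :=
  {P | ∃ (a : ℂ) (θ : Fin n → ℝ), a ≠ 0 ∧
    P = C a * ∏ j, (X - C (uexp (θ j))) ∧
    ∀ j k, j ≠ k → lam < angDist (θ j) (θ k)}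

/-- The quantity `e^{-inλ/2} F₊(z)/F₋(z)`. -/
def dQuot (n : ℕ) (lam : ℝ) (F : Polynomial ℂ) (z : ℂ) : ℂ :=
  uexp (-(n * lam) / 2) * F.eval (uexp (lam / 2) * z) / F.eval (uexp (-(lam / 2)) * z)

/-- The class `D̄_n(λ)` for `λ ∈ [0, 2π/n]`. -/
def Dbar (n : ℕ) (lam : ℝ) : Set (Polynomial ℂ) :=
  if lam = 0 then polyOn n {z | ‖z‖ ≤ 1}
  else if lam = 2 * Real.pi / n then
    {P | ∃ a b : ℂ, a ≠ 0 ∧ ‖b‖ ≤ 1 ∧ P = C a * (X ^ n - C b)}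
  else {P | P.natDegree = n ∧ ∀ z : ℂ, 1 < ‖z‖ → 0 < (dQuot n lam P z).im}

/-- The class `D_n(λ)` for `λ ∈ [0, 2π/n)`. -/
def Dset (n : ℕ) (lam : ℝ) : Set (Polynomial ℂ) :=
  Tstrict n lam ∪
    (if lam = 0 then polyOn n {z | ‖z‖ < 1}
     else {P | P.natDegree = n ∧ ∀ z : ℂ, 1 ≤ ‖z‖ → 0 < (dQuot n lam P z).im})

/-- `Q_n(λ; z) = ∏_{j=1}^n (1 + e^{i(2j-n-1)λ/2} z)`. -/
def Qpoly (n : ℕ) (lam : ℝ) : Polynomial ℂ :=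
  ∏ j ∈ Finset.range n, (1 + C (uexp ((2 * (j : ℝ) + 1 - n) * lam / 2)) * X)

/-- The coefficients `C_k^{(n)}(λ)` of `Q_n(λ; ·)`. -/
def Ccoef (n k : ℕ) (lam : ℝ) : ℂ := (Qpoly n lam).coeff k

/-- The Suffridge convolution `F *_λ G` of two degree-`n` polynomials. -/
def lamConv (n : ℕ) (lam : ℝ) (F G : Polynomial ℂ) : Polynomial ℂ :=
  ∑ k ∈ Finset.range (n + 1), C (F.coeff k * G.coeff k / Ccoef n k lam) * X ^ k

/-- `preOf n lam f = f * Q_n(λ;·) = ∑ C_k^{(n)}(λ) a_k z^k`; so `f` belongs to the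
pre-coefficient class `P𝒞_n(λ)` iff `preOf n lam f ∈ 𝒞_n(λ)`. -/
def preOf (n : ℕ) (lam : ℝ) (f : Polynomial ℂ) : Polynomial ℂ :=
  ∑ k ∈ Finset.range (n + 1), C (Ccoef n k lam * f.coeff k) * X ^ k

/-- Pre-extremal polynomials `a ∑_{k=0}^n b^k z^k`, `a ≠ 0`, `|b| = 1`. -/
def PreExtremal (n : ℕ) (f : Polynomial ℂ) : Prop :=
  ∃ a b : ℂ, a ≠ 0 ∧ ‖b‖ = 1 ∧
    f = C a * ∑ k ∈ Finset.range (n + 1), C (b ^ k) * X ^ k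

/-- The `n`-inverse `F^{*n}(z) = z^n conj (F (1/ conj z))`. -/
def nInv (n : ℕ) (F : Polynomial ℂ) : Polynomial ℂ :=
  (F.reflect n).map (starRingEnd ℂ)

/-- `F₊(z) = F(e^{iλ/2} z)` as a polynomial. -/
def plusPoly (lam : ℝ) (F : Polynomial ℂ) : Polynomial ℂ :=
  F.comp (C (uexp (lam / 2)) * X)

/-- `F₋(z) = F(e^{-iλ/2} z)` as a polynomial. -/
def minusPoly (lam : ℝ) (F : Polynomial ℂ) : Polynomial ℂ :=
  F.comp (C (uexp (-(lam / 2))) * X)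

/-- The operator `Δ_λ^n[F](z) = (F₊(z) - F₋(z)) / (2 i z sin(nλ/2))`, with
`Δ_0^n[F] = F'/n`. -/
def Delta (n : ℕ) (lam : ℝ) (F : Polynomial ℂ) : Polynomial ℂ :=
  if lam = 0 then C ((n : ℂ)⁻¹) * derivative F
  else C ((2 * Complex.I * (Real.sin (n * lam / 2) : ℂ))⁻¹) *
    (plusPoly lam F - minusPoly lam F).divX

/-- `P` and `Q` (of degree `n`, zeros on the unit circle) have strictly interspersed
zeros: they are coprime and their zeros alternate on the unit circle. -/
def StrictIntersp (n : ℕ) (P Q : Polynomial ℂ) : Prop :=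
  IsCoprime P Q ∧ ∃ (a b : ℂ) (θ φ : ℕ → ℝ), a ≠ 0 ∧ b ≠ 0 ∧
    P = C a * ∏ j ∈ Finset.range n, (X - C (uexp (θ j))) ∧
    Q = C b * ∏ j ∈ Finset.range n, (X - C (uexp (φ j))) ∧
    (∀ j, j < n → θ j < φ j) ∧
    (∀ j, j + 1 < n → φ j < θ (j + 1)) ∧
    (0 < n → φ (n - 1) < θ 0 + 2 * Real.pi)

/-- The Grace–Szegő convolution of two polynomials of degree ≤ n. -/
def GSconv (n : ℕ) (F G : Polynomial ℂ) : Polynomial ℂ :=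
  ∑ k ∈ Finset.range (n + 1), C (F.coeff k * G.coeff k / (n.choose k : ℂ)) * X ^ k

/-- `Ω_{τ,γ}` : the image of the unit disk under `z ↦ τz/(1+γz)`. -/
def OmegaSet (τ : ℂ) (γ : ℝ) : Set ℂ :=
  (fun z => τ * z / (1 + (γ : ℂ) * z)) '' Metric.ball 0 1

/-- `I_γ = {z : |z| + γ|1+z| < 1}`. -/
def Iset (γ : ℝ) : Set ℂ := {z | ‖z‖ + γ * ‖1 + z‖ < 1}

/-- `O_γ = {z : |z| - γ|1+z| > 1}`. -/
def Oset (γ : ℝ) : Set ℂ := {z | 1 < ‖z‖ - γ * ‖1 + z‖}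

end

open ComplexOrder ComplexConjugate Filter Topology

lemma uexp_add (s t : ℝ) : uexp (s + t) = uexp s * uexp t := by
  simp [uexp, mul_add, Complex.exp_add]

lemma norm_uexp (t : ℝ) : ‖uexp t‖ = 1 := by
  simp [uexp, Complex.norm_exp]

lemma conj_uexp (t : ℝ) : conj (uexp t) = uexp (-t) := by
  rw [uexp, ← Complex.exp_conj]
  simp [uexp]

lemma uexp_pow (t : ℝ) (k : ℕ) : uexp t ^ k = uexp (k * t) := by
  rw [uexp, uexp, ← Complex.exp_nat_mul]
  push_cast
  ring_nf

lemma continuous_uexp : Continuous uexp := by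
  unfold uexp
  fun_prop

lemma uexp_sub_uexp_neg (t : ℝ) : uexp t - uexp (-t) = 2 * I * Real.sin t := by
  rw [Complex.ofReal_sin, Complex.sin, uexp, uexp, Complex.ofReal_neg]
  ring_nf
  rw [Complex.I_sq]
  ring_nf

lemma uexp_sub_one (t : ℝ) : uexp t - 1 = 2 * I * Real.sin (t / 2) * uexp (t / 2) := by
  have hsq : uexp t = uexp (t / 2) * uexp (t / 2) := by rw [← uexp_add, add_halves]
  have hinv : uexp (t / 2) * uexp (-(t / 2)) = 1 := by rw [← uexp_add, add_neg_cancel]; simp [uexp]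
  linear_combination hsq + hinv + uexp (t / 2) * uexp_sub_uexp_neg (t / 2)

lemma uexp_sq_injOn : Set.InjOn (fun t => uexp t ^ 2) (Set.Ico 0 Real.pi) := by
  intro s ⟨hs, hs'⟩ t ⟨ht, ht'⟩ h
  dsimp only at h
  rw [uexp_pow, uexp_pow, uexp, uexp] at h
  obtain ⟨k, hk⟩ := Complex.exp_eq_exp_iff_exists_int.mp h
  have him := congrArg Complex.im hk
  norm_num at him
  have hk0 : k = 0 := by
    have : (-1 : ℝ) < k ∧ (k : ℝ) < 1 := by
      constructor <;> nlinarith [Real.pi_pos]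
    have : -1 < k ∧ k < 1 := by exact_mod_cast this
    omega
  subst hk0
  norm_num at him
  linarith

lemma eq_zero_of_nonneg_right_of_nonpos_left {α : Type*} [TopologicalSpace α] [Zero α]
    [PartialOrder α] [OrderClosedTopology α] {f : ℝ → α} {a : ℝ} (hf : ContinuousAt f a)
    (hright : ∀ᶠ t in 𝓝[>] a, 0 ≤ f t) (hleft : ∀ᶠ t in 𝓝[<] a, f t ≤ 0) : f a = 0 :=
  le_antisymm (le_of_tendsto (hf.tendsto.mono_left nhdsWithin_le_nhds) hleft)
    (ge_of_tendsto (hf.tendsto.mono_left nhdsWithin_le_nhds) hright)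

lemma Complex.nonneg_of_real_mul_nonneg {r : ℝ} {w : ℂ} (hr : 0 < r) (h : 0 ≤ (r : ℂ) * w) :
    0 ≤ w := by
  have hw : w = ((r⁻¹ : ℝ) : ℂ) * (r * w) := by
    push_cast
    field_simp
  rw [hw]
  exact mul_nonneg (Complex.zero_le_real.mpr (inv_nonneg.mpr hr.le)) h

lemma Complex.nonpos_of_real_mul_nonneg {r : ℝ} {w : ℂ} (hr : r < 0) (h : 0 ≤ (r : ℂ) * w) :
    w ≤ 0 := by
  have hw : w = ((r⁻¹ : ℝ) : ℂ) * (r * w) := by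
    have : (r : ℂ) ≠ 0 := by exact_mod_cast hr.ne
    push_cast
    field_simp
  rw [hw]
  exact mul_nonpos_of_nonpos_of_nonneg (Complex.real_le_real.mpr (inv_nonpos.mpr hr.le)) h

theorem even_rootMultiplicity_of_nonneg_mul_eval {p : ℂ[X]} {u : ℂ → ℂ} {z : ℂ}
    (hz : ‖z‖ = 1) (hu : ContinuousAt u z) (huz : u z ≠ 0)
    (hp : ∀ w : ℂ, ‖w‖ = 1 → 0 ≤ u w * p.eval w) : Even (p.rootMultiplicity z) := by
  by_cases hp0 : p = 0
  · simp [hp0]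
  by_contra hodd
  set m := p.rootMultiplicity z
  set G := p /ₘ (X - C z) ^ m
  have hfac : (X - C z) ^ m * G = p := p.pow_mul_divByMonic_rootMultiplicity_eq z
  have hG : G.eval z ≠ 0 := eval_divByMonic_pow_rootMultiplicity_ne_zero z hp0
  have hz0 : z ≠ 0 := by rintro rfl; simp at hz
  let w : ℝ → ℂ := fun t => z * uexp t
  have hw : ∀ t, ‖w t‖ = 1 := fun t => by simp [w, hz, norm_uexp]
  -- `u p` at `z e^{it}` is `sin(t/2)^m ψ t` with `ψ` continuous and nonzero at `0`, while
  -- `sin(t/2)^m` changes sign at `0` for odd `m`.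
  let ψ : ℝ → ℂ := fun t => u (w t) * (2 * I * z * uexp (t / 2)) ^ m * G.eval (w t)
  have hψ : ∀ t, u (w t) * p.eval (w t) = (Real.sin (t / 2) ^ m : ℝ) * ψ t := by
    intro t
    have hsub : w t - z = 2 * I * Real.sin (t / 2) * z * uexp (t / 2) := by
      linear_combination z * uexp_sub_one t
    simp only [← hfac, eval_mul, eval_pow, eval_sub, eval_X, eval_C, hsub, ψ]
    push_cast
    ring
  have hw0 : w 0 = z := by simp [w, uexp]
  have hψ0 : ψ 0 ≠ 0 := by
    simp only [ψ, hw0]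
    refine mul_ne_zero (mul_ne_zero huz (pow_ne_zero _ ?_)) hG
    simp [hz0, uexp]
  have hwc : Continuous w := continuous_const.mul continuous_uexp
  have hψc : ContinuousAt ψ 0 := by
    refine ContinuousAt.mul (ContinuousAt.mul (hu.comp_of_eq hwc.continuousAt hw0) ?_) ?_
    · exact ((continuous_const.mul (continuous_uexp.comp (continuous_id.div_const 2))).pow
        m).continuousAt
    · exact ((Polynomial.continuous G).comp hwc).continuousAt
  refine hψ0 (eq_zero_of_nonneg_right_of_nonpos_left hψc ?_ ?_)
  · filter_upwards [Ioo_mem_nhdsGT (by positivity : (0 : ℝ) < 2 * Real.pi)] with t ht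
    have hs : 0 < Real.sin (t / 2) :=
      Real.sin_pos_of_pos_of_lt_pi (by linarith [ht.1]) (by linarith [ht.2])
    exact Complex.nonneg_of_real_mul_nonneg (pow_pos hs m) (hψ t ▸ hp _ (hw t))
  · filter_upwards [Ioo_mem_nhdsLT (by linarith [Real.pi_pos] : -(2 * Real.pi) < 0)] with t ht
    have hs : Real.sin (t / 2) < 0 :=
      Real.sin_neg_of_neg_of_neg_pi_lt (by linarith [ht.2]) (by linarith [ht.1])
    exact Complex.nonpos_of_real_mul_nonneg ((Nat.not_even_iff_odd.mp hodd).pow_neg hs)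
      (hψ t ▸ hp _ (hw t))

lemma nInv_sub (n : ℕ) (F G : ℂ[X]) : nInv n (F - G) = nInv n F - nInv n G := by
  simp [nInv, reflect_sub, Polynomial.map_sub]

lemma nInv_C_mul (n : ℕ) (c : ℂ) (F : ℂ[X]) :
    nInv n (C c * F) = C (conj c) * nInv n F := by
  simp [nInv, reflect_C_mul, Polynomial.map_mul]

lemma nInv_eq_C_sq_mul_of_selfInv {n : ℕ} {P : ℂ[X]} {c : ℂ} (hc : ‖c‖ = 1)
    (h : nInv n (C c * P) = C c * P) : nInv n P = C (c ^ 2) * P := by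
  have hcc : c * conj c = 1 := by
    rw [Complex.mul_conj, Complex.normSq_eq_norm_sq, hc]; norm_num
  calc nInv n P = C c * (C (conj c) * nInv n P) := by
        rw [← mul_assoc, ← map_mul, hcc, map_one, one_mul]
    _ = C (c ^ 2) * P := by rw [← nInv_C_mul, h, ← mul_assoc, ← map_mul, sq]

lemma nInv_eval_of_norm_eq_one {n : ℕ} {F : ℂ[X]} (hF : F.natDegree ≤ n) {w : ℂ}
    (hw : ‖w‖ = 1) : (nInv n F).eval w = w ^ n * conj (F.eval w) := by
  have hw1 : conj w * w = 1 := by rw [Complex.conj_mul', hw]; simp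
  have hcw : conj w ≠ 0 := left_ne_zero_of_mul_eq_one hw1
  let _ := invertibleOfNonzero hcw
  have hinv : ⅟(conj w) = w := by rw [invOf_eq_inv, inv_eq_of_mul_eq_one_right hw1]
  have h := eval₂_reflect_mul_pow (starRingEnd ℂ) (conj w) n F hF
  rw [hinv, eval₂_at_apply] at h
  rw [nInv, eval_map, ← h, mul_comm, mul_assoc, ← mul_pow, hw1, one_pow, mul_one]

/-- `S = shiftCross lam P Q` and `T = shiftCross lam F (nInv n F)`. -/
noncomputable def shiftCross (lam : ℝ) (F G : ℂ[X]) : ℂ[X] :=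
  plusPoly lam F * minusPoly lam G - minusPoly lam F * plusPoly lam G

lemma shiftCross_sub_C_mul_sub_C_mul (lam : ℝ) (P Q : ℂ[X]) (a b : ℂ) :
    shiftCross lam (P - Q) (C a * P - C b * Q) = C (a - b) * shiftCross lam P Q := by
  simp only [shiftCross, plusPoly, minusPoly, sub_comp, mul_comp, C_comp, map_sub]
  ring

noncomputable def dProd (n : ℕ) (lam : ℝ) (F : ℂ[X]) (z : ℂ) : ℂ :=
  uexp (-(n * lam) / 2) * F.eval (uexp (lam / 2) * z) * conj (F.eval (uexp (-(lam / 2)) * z))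

lemma dProd_eq_normSq_mul_dQuot (n : ℕ) (lam : ℝ) (F : ℂ[X]) (z : ℂ) :
    dProd n lam F z = normSq (F.eval (uexp (-(lam / 2)) * z)) * dQuot n lam F z := by
  rw [dProd, dQuot, ← Complex.mul_conj]
  generalize F.eval (uexp (-(lam / 2)) * z) = v
  rcases eq_or_ne v 0 with rfl | hv
  · simp
  · field_simp

lemma continuous_dProd (n : ℕ) (lam : ℝ) (F : ℂ[X]) : Continuous (dProd n lam F) := by
  unfold dProd
  fun_prop

lemma im_dProd_nonneg {n : ℕ} {lam : ℝ} {F : ℂ[X]}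
    (hIm : ∀ z : ℂ, 1 < ‖z‖ → 0 < (dQuot n lam F z).im) {w : ℂ} (hw : ‖w‖ = 1) :
    0 ≤ (dProd n lam F w).im := by
  have hlim : Tendsto (fun r : ℝ => (dProd n lam F (r * w)).im) (𝓝[>] 1)
      (𝓝 (dProd n lam F w).im) := by
    have hc : Continuous fun r : ℝ => (dProd n lam F (r * w)).im :=
      Complex.continuous_im.comp ((continuous_dProd n lam F).comp (by fun_prop))
    simpa using (hc.tendsto 1).mono_left nhdsWithin_le_nhds
  refine ge_of_tendsto hlim ?_
  filter_upwards [self_mem_nhdsWithin] with r (hr : 1 < r)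
  have hrw : 1 < ‖(r : ℂ) * w‖ := by
    rwa [norm_mul, hw, mul_one, Complex.norm_real, Real.norm_of_nonneg (by linarith)]
  rw [dProd_eq_normSq_mul_dQuot, Complex.im_ofReal_mul]
  exact mul_nonneg (Complex.normSq_nonneg _) (hIm _ hrw).le

lemma eval_shiftCross_nInv {n : ℕ} (lam : ℝ) {F : ℂ[X]} (hF : F.natDegree ≤ n) {w : ℂ}
    (hw : ‖w‖ = 1) :
    (shiftCross lam F (nInv n F)).eval w = w ^ n * ((2 * (dProd n lam F w).im : ℝ) * I) := by
  have hnorm : ∀ s : ℝ, ‖uexp s * w‖ = 1 := fun s => by rw [norm_mul, norm_uexp, hw, one_mul]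
  have hpow : ∀ s : ℝ, (uexp s * w) ^ n = uexp (n * s) * w ^ n := fun s => by
    rw [mul_pow, uexp_pow]
  rw [← Complex.sub_conj]
  simp only [shiftCross, eval_sub, eval_mul, plusPoly, minusPoly, eval_comp, eval_C, eval_X,
    nInv_eval_of_norm_eq_one hF (hnorm _), hpow, dProd, map_mul, conj_conj, conj_uexp]
  rw [show (n : ℝ) * -(lam / 2) = -(n * lam) / 2 by ring,
    show (n : ℝ) * (lam / 2) = -(-(n * lam) / 2) by ring]
  ring

lemma even_rootMultiplicity_shiftCross_nInv {n : ℕ} {lam : ℝ} {F : ℂ[X]}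
    (hF : F.natDegree ≤ n) (hIm : ∀ z : ℂ, 1 < ‖z‖ → 0 < (dQuot n lam F z).im) {z : ℂ}
    (hz : ‖z‖ = 1) : Even ((shiftCross lam F (nInv n F)).rootMultiplicity z) := by
  refine even_rootMultiplicity_of_nonneg_mul_eval (u := fun w => -I * conj w ^ n) hz
    (by fun_prop) ?_ fun w hw => ?_
  · have : z ≠ 0 := by rintro rfl; simp at hz
    simp [this]
  · have hw1 : conj w ^ n * w ^ n = 1 := by rw [← mul_pow, Complex.conj_mul', hw]; simp
    have h : -I * conj w ^ n * (shiftCross lam F (nInv n F)).eval w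
        = ((2 * (dProd n lam F w).im : ℝ) : ℂ) := by
      rw [eval_shiftCross_nInv lam hF hw]
      generalize ((2 * (dProd n lam F w).im : ℝ) : ℂ) = g
      linear_combination (-I * I * g) * hw1 - g * Complex.I_sq
    rw [h, Complex.zero_le_real]
    exact mul_nonneg zero_le_two (im_dProd_nonneg hIm hw)

lemma Dbar_of_pos_of_lt {n : ℕ} {lam : ℝ} (h0 : 0 < lam) (h1 : lam < 2 * Real.pi / n) :
    Dbar n lam = {F | F.natDegree = n ∧ ∀ z : ℂ, 1 < ‖z‖ → 0 < (dQuot n lam F z).im} := by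
  rw [Dbar, if_neg h0.ne', if_neg h1.ne]

theorem stmt11_general (n : ℕ) (lam : ℝ) (h0 : 0 < lam) (h1 : lam < 2 * Real.pi / n)
    (P Q : Polynomial ℂ)
    (cP cQ : ℂ) (tP tQ : ℝ)
    (htP : 0 ≤ tP ∧ tP < Real.pi) (hcP : cP = uexp tP)
    (hsP : nInv n (C cP * P) = C cP * P)
    (htQ : 0 ≤ tQ ∧ tQ < Real.pi) (hcQ : cQ = uexp tQ)
    (hsQ : nInv n (C cQ * Q) = C cQ * Q)
    (hcc : cP ≠ cQ)
    (F S T : Polynomial ℂ) (hF : F = P - Q)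
    (hS : S = plusPoly lam P * minusPoly lam Q - minusPoly lam P * plusPoly lam Q)
    (hT : T = plusPoly lam F * minusPoly lam (nInv n F) -
      minusPoly lam F * plusPoly lam (nInv n F))
    (hmem : F ∈ Dbar n lam \ Tbar n lam) :
    (∀ z : ℂ, ‖z‖ = 1 → S.IsRoot z → Even (rootMultiplicity z S)) ∧
    (∀ z : ℂ, ‖z‖ = 1 → T.IsRoot z → Even (rootMultiplicity z T)) := by
  obtain ⟨hFdeg, hIm⟩ : F ∈ {F : ℂ[X] | _} := Dbar_of_pos_of_lt h0 h1 ▸ hmem.1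
  have hTeven (z : ℂ) (hz : ‖z‖ = 1) : Even (rootMultiplicity z T) :=
    hT ▸ even_rootMultiplicity_shiftCross_nInv hFdeg.le hIm hz
  have hsq : cP ^ 2 - cQ ^ 2 ≠ 0 := by
    subst hcP hcQ
    exact sub_ne_zero.mpr fun h => hcc (congrArg uexp (uexp_sq_injOn htP htQ h))
  have hTS : T = C (cP ^ 2 - cQ ^ 2) * S := by
    rw [hT, hS, hF, nInv_sub,
      nInv_eq_C_sq_mul_of_selfInv (hcP ▸ norm_uexp tP) hsP,
      nInv_eq_C_sq_mul_of_selfInv (hcQ ▸ norm_uexp tQ) hsQ]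
    exact shiftCross_sub_C_mul_sub_C_mul lam P Q _ _
  refine ⟨fun z hz _ => ?_, fun z hz _ => hTeven z hz⟩
  simpa only [hTS, ← count_roots, roots_C_mul S hsq] using hTeven z hz

theorem stmt11 (n : ℕ) (hn : 1 ≤ n) (lam : ℝ) (h0 : 0 < lam) (h1 : lam < 2 * Real.pi / n)
    (P Q : Polynomial ℂ)
    (hP : P ∈ polyOn n {z : ℂ | ‖z‖ = 1})
    (hQ : Q ∈ polyOn n {z : ℂ | ‖z‖ = 1})
    (cP cQ : ℂ) (tP tQ : ℝ)
    (htP : 0 ≤ tP ∧ tP < Real.pi) (hcP : cP = uexp tP)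
    (hsP : nInv n (C cP * P) = C cP * P)
    (htQ : 0 ≤ tQ ∧ tQ < Real.pi) (hcQ : cQ = uexp tQ)
    (hsQ : nInv n (C cQ * Q) = C cQ * Q)
    (hcc : cP ≠ cQ)
    (F S T : Polynomial ℂ) (hF : F = P - Q)
    (hS : S = plusPoly lam P * minusPoly lam Q - minusPoly lam P * plusPoly lam Q)
    (hT : T = plusPoly lam F * minusPoly lam (nInv n F) -
      minusPoly lam F * plusPoly lam (nInv n F))
    (hmem : F ∈ Dbar n lam \ Tbar n lam) :
    (∀ z : ℂ, ‖z‖ = 1 → S.IsRoot z → Even (rootMultiplicity z S)) ∧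
    (∀ z : ℂ, ‖z‖ = 1 → T.IsRoot z → Even (rootMultiplicity z T)) :=
  stmt11_general n lam h0 h1 P Q cP cQ tP tQ htP hcP hsP htQ hcQ hsQ hcc F S T hF hS hT hmem
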